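/- Let γ > 1, let A, B: ℝ → (0,∞) be C¹ functions, let Ω ⊆ ℝ² be open, and let (m, p, ρ) be a C¹ solution of the steady full Euler equations on Ω with ρ > 0. Suppose ψ ∈ C²(Ω) is a stream function for the flow, i.e. ψ_{x₁} = −m₂ and ψ_{x₂} = m₁ on Ω, that ∇ψ is nowhere zero, and that the constitutive relations p = ((γ−1)/γ) A(ψ) ρ^γ and |m|²/(2ρ²) + γp/((γ−1)ρ) = B(ψ) hold on Ω, with ρ lying on the subsonic branch ρ^{γ−1} > 2B(ψ)/((γ+1)A(ψ)). Then ψ satisfies the reduced elliptic equation Σ_{i,j} a_{ij}(ψ,∇ψ) ψ_{x_i x_j} = F(ψ,∇ψ) on Ω. -/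

import Mathlib

open Set
open scoped ENNReal NNReal

noncomputable section

abbrev E2 : Type := EuclideanSpace ℝ (Fin 2)

/-- The point `(a, b)` of the Euclidean plane. -/
def pt (a b : ℝ) : E2 := (WithLp.equiv 2 (Fin 2 → ℝ)).symm ![a, b]

/-- Partial derivative in the `i`-th coordinate direction. -/
def pd (i : Fin 2) (f : E2 → ℝ) : E2 → ℝ :=
  fun x => fderiv ℝ f x (EuclideanSpace.single i 1)

/-- Iterated mixed partial derivative `∂₁^{k₁} ∂₂^{k₂} f`. -/
def Dmix (k₁ k₂ : ℕ) (f : E2 → ℝ) : E2 → ℝ := (pd 0)^[k₁] ((pd 1)^[k₂] f)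

/-- The steady full Euler equations on `Ω`: conservation of mass, the two momentum
equations, and conservation of energy, with `E = |m|²/(2ρ²) + p/((γ-1)ρ)`. -/
def EulerEqs (γ : ℝ) (Ω : Set E2) (m₁ m₂ p ρ : E2 → ℝ) : Prop :=
  ∀ x ∈ Ω,
    pd 0 m₁ x + pd 1 m₂ x = 0 ∧
    pd 0 (fun y => m₁ y ^ 2 / ρ y) x + pd 1 (fun y => m₁ y * m₂ y / ρ y) x + pd 0 p x = 0 ∧
    pd 0 (fun y => m₁ y * m₂ y / ρ y) x + pd 1 (fun y => m₂ y ^ 2 / ρ y) x + pd 1 p x = 0 ∧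
    pd 0 (fun y => m₁ y *
        ((m₁ y ^ 2 + m₂ y ^ 2) / (2 * ρ y ^ 2) + p y / ((γ - 1) * ρ y) + p y / ρ y)) x +
      pd 1 (fun y => m₂ y *
        ((m₁ y ^ 2 + m₂ y ^ 2) / (2 * ρ y ^ 2) + p y / ((γ - 1) * ρ y) + p y / ρ y)) x = 0

/-- `ρ` is the subsonic-branch solution of the Bernoulli relation
`½|∇ψ|² = B(ψ)ρ² - A(ψ)ρ^{γ+1}` at the point `x`. -/
def BernoulliBranch (γ : ℝ) (A B : ℝ → ℝ) (ψ : E2 → ℝ) (ρ : ℝ) (x : E2) : Prop :=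
  0 < ρ ∧ 2 * B (ψ x) / ((γ + 1) * A (ψ x)) < ρ ^ (γ - 1) ∧
    (pd 0 ψ x ^ 2 + pd 1 ψ x ^ 2) / 2 = B (ψ x) * ρ ^ 2 - A (ψ x) * ρ ^ (γ + 1)

/-- The nondivergence-form reduced equation
`Σ_{i,j} a_{ij}(ψ,∇ψ) ψ_{x_i x_j} = F(ψ,∇ψ)` at the point `x`, with density value `ρ`. -/
def NonDivEq (γ : ℝ) (A B : ℝ → ℝ) (ψ : E2 → ℝ) (ρ : ℝ) (x : E2) : Prop :=
  ((γ - 1) * A (ψ x) * ρ ^ (γ + 1) - pd 1 ψ x ^ 2) * pd 0 (pd 0 ψ) x +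
      pd 0 ψ x * pd 1 ψ x * (pd 0 (pd 1 ψ) x + pd 1 (pd 0 ψ) x) +
      ((γ - 1) * A (ψ x) * ρ ^ (γ + 1) - pd 0 ψ x ^ 2) * pd 1 (pd 1 ψ) x =
    ((γ - 1) / γ) * ρ ^ (γ + 3) *
      (γ * A (ψ x) * deriv B (ψ x) - 2 * deriv A (ψ x) * B (ψ x) +
        A (ψ x) * deriv A (ψ x) * ρ ^ (γ - 1))

/-- The reduced elliptic equation for the stream function on `Ω`: at every point the
Bernoulli relation is solvable on the subsonic branch and, with that density,
the equation `a_{ij}(ψ,∇ψ) ψ_{x_i x_j} = F(ψ,∇ψ)` holds. -/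
def ReducedEq (γ : ℝ) (A B : ℝ → ℝ) (Ω : Set E2) (ψ : E2 → ℝ) : Prop :=
  ∀ x ∈ Ω, ∃ ρ : ℝ, BernoulliBranch γ A B ψ ρ x ∧ NonDivEq γ A B ψ ρ x

/-!
Write `q = |∇ψ|²` and `K = (γ-1)A(ψ)ρ^{γ+1}`. The left side of the reduced equation is
`KΔψ - L₀ψ`, where `L₀ψ = ψ₂²ψ₁₁ - ψ₁ψ₂(ψ₁₂ + ψ₂₁) + ψ₁²ψ₂₂` is `q` times the second
derivative along the streamlines, and `L₀ψ + L₁ψ = qΔψ` with `L₁ψ = ∇ψ·∇(q/2)`. The two momentum equations, combined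
across the streamlines, give `L₀ψ = ρ ∇ψ·∇p`. Differentiating the pressure law and the Bernoulli
law `q = 2B(ψ)ρ² - 2A(ψ)ρ^{γ+1}` along `∇ψ` expresses `∇ψ·∇p` and `L₁ψ` through `∇ψ·∇ρ`. In
`q(KΔψ - L₀ψ) = (K - q)L₀ψ + KL₁ψ` the `∇ψ·∇ρ` terms cancel by the Bernoulli law, leaving `qF`.
-/

open Filter Topology

section PartialDerivative

variable {f g : E2 → ℝ} {x : E2} {i : Fin 2}

theorem pd_congr (h : f =ᶠ[𝓝 x] g) : pd i f x = pd i g x := by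
  rw [pd, pd, h.fderiv_eq]

theorem pd_neg : pd i (fun y => -f y) x = -pd i f x := by
  simp [pd, fderiv_fun_neg]

theorem pd_add (hf : DifferentiableAt ℝ f x) (hg : DifferentiableAt ℝ g x) :
    pd i (fun y => f y + g y) x = pd i f x + pd i g x := by
  simp [pd, fderiv_fun_add hf hg]

theorem pd_sub (hf : DifferentiableAt ℝ f x) (hg : DifferentiableAt ℝ g x) :
    pd i (fun y => f y - g y) x = pd i f x - pd i g x := by
  simp [pd, fderiv_fun_sub hf hg]

theorem pd_const_mul (c : ℝ) (hf : DifferentiableAt ℝ f x) :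
    pd i (fun y => c * f y) x = c * pd i f x := by
  simp [pd, fderiv_const_mul hf]

theorem pd_mul (hf : DifferentiableAt ℝ f x) (hg : DifferentiableAt ℝ g x) :
    pd i (fun y => f y * g y) x = pd i f x * g x + f x * pd i g x := by
  simp [pd, fderiv_fun_mul hf hg]
  ring

theorem pd_sq (hf : DifferentiableAt ℝ f x) : pd i (fun y => f y ^ 2) x = 2 * f x * pd i f x := by
  simp [pd, fderiv_fun_pow 2 hf]

theorem pd_comp {φ : ℝ → ℝ} (hφ : DifferentiableAt ℝ φ (f x)) (hf : DifferentiableAt ℝ f x) :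
    pd i (fun y => φ (f y)) x = deriv φ (f x) * pd i f x := by
  change fderiv ℝ (φ ∘ f) x _ = _
  rw [(hφ.hasDerivAt.comp_hasFDerivAt x hf.hasFDerivAt).fderiv]
  simp [pd]

theorem pd_rpow (s : ℝ) (hf : DifferentiableAt ℝ f x) (hfx : f x ≠ 0) :
    pd i (fun y => f y ^ s) x = s * f x ^ (s - 1) * pd i f x := by
  simp [pd, (hf.hasFDerivAt.rpow_const (Or.inl hfx)).fderiv]

theorem pd_div (hf : DifferentiableAt ℝ f x) (hg : DifferentiableAt ℝ g x) (hgx : g x ≠ 0) :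
    pd i (fun y => f y / g y) x = (pd i f x * g x - f x * pd i g x) / g x ^ 2 := by
  simp only [div_eq_mul_inv]
  rw [pd_mul (g := fun y => (g y)⁻¹) hf (hg.inv hgx),
    pd_comp (φ := fun t => t⁻¹) (differentiableAt_inv hgx) hg, deriv_inv]
  field_simp
  ring

theorem pd_const_mul_comp_mul_rpow {φ : ℝ → ℝ} {ψ ρ : E2 → ℝ} (c s : ℝ)
    (hφ : DifferentiableAt ℝ φ (ψ x)) (hψ : DifferentiableAt ℝ ψ x)
    (hρ : DifferentiableAt ℝ ρ x) (hρx : ρ x ≠ 0) :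
    pd i (fun y => c * φ (ψ y) * ρ y ^ s) x =
      c * (deriv φ (ψ x) * pd i ψ x * ρ x ^ s + s * φ (ψ x) * ρ x ^ (s - 1) * pd i ρ x) := by
  have hφψ : DifferentiableAt ℝ (fun y => φ (ψ y)) x := hφ.comp x hψ
  have hρs : DifferentiableAt ℝ (fun y => ρ y ^ s) x := hρ.rpow_const (Or.inl hρx)
  simp only [mul_assoc c]
  rw [pd_const_mul c (hφψ.fun_mul hρs), pd_mul hφψ hρs, pd_comp hφ hψ, pd_rpow s hρ hρx]
  ring

end PartialDerivative

section Flow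

variable {γ : ℝ} {A B : ℝ → ℝ} {Ω : Set E2} {m₁ m₂ p ρ ψ : E2 → ℝ} {x : E2}

theorem EulerEqs.transverse_momentum (h : EulerEqs γ Ω m₁ m₂ p ρ) (hx : x ∈ Ω)
    (hm₁ : DifferentiableAt ℝ m₁ x) (hm₂ : DifferentiableAt ℝ m₂ x)
    (hρ : DifferentiableAt ℝ ρ x) (hρx : ρ x ≠ 0) :
    m₁ x * m₂ x * (pd 0 m₁ x - pd 1 m₂ x) + m₂ x ^ 2 * pd 1 m₁ x - m₁ x ^ 2 * pd 0 m₂ x =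
      ρ x * (m₁ x * pd 1 p x - m₂ x * pd 0 p x) := by
  obtain ⟨-, h₁, h₂, -⟩ := h x hx
  rw [pd_div (hm₁.fun_pow 2) hρ hρx, pd_div (hm₁.fun_mul hm₂) hρ hρx, pd_sq hm₁,
    pd_mul hm₁ hm₂] at h₁
  rw [pd_div (hm₁.fun_mul hm₂) hρ hρx, pd_div (hm₂.fun_pow 2) hρ hρx, pd_sq hm₂,
    pd_mul hm₁ hm₂] at h₂
  field_simp at h₁ h₂
  apply mul_left_cancel₀ hρx
  linear_combination m₂ x * h₁ - m₁ x * h₂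

theorem EulerEqs.transverse_momentum_of_stream (h : EulerEqs γ Ω m₁ m₂ p ρ) (hx : x ∈ Ω)
    (hm₁ : DifferentiableAt ℝ m₁ x) (hm₂ : DifferentiableAt ℝ m₂ x)
    (hρ : DifferentiableAt ℝ ρ x) (hρx : ρ x ≠ 0)
    (h₀ : pd 0 ψ =ᶠ[𝓝 x] fun y => -m₂ y) (h₁ : pd 1 ψ =ᶠ[𝓝 x] m₁) :
    pd 1 ψ x ^ 2 * pd 0 (pd 0 ψ) x - pd 0 ψ x * pd 1 ψ x * (pd 0 (pd 1 ψ) x + pd 1 (pd 0 ψ) x)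
        + pd 0 ψ x ^ 2 * pd 1 (pd 1 ψ) x = ρ x * (pd 0 ψ x * pd 0 p x + pd 1 ψ x * pd 1 p x) := by
  rw [pd_congr h₀, pd_congr h₀, pd_neg, pd_neg, pd_congr h₁, pd_congr h₁, h₀.eq_of_nhds,
    h₁.eq_of_nhds]
  linear_combination h.transverse_momentum hx hm₁ hm₂ hρ hρx

theorem sq_add_sq_eq_of_bernoulli {a b u v p₀ ρ₀ : ℝ} (hγ : γ ≠ 0) (hγ₁ : γ - 1 ≠ 0)
    (hρ₀ : 0 < ρ₀) (hp₀ : p₀ = (γ - 1) / γ * a * ρ₀ ^ γ)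
    (hb : (u ^ 2 + v ^ 2) / (2 * ρ₀ ^ 2) + γ * p₀ / ((γ - 1) * ρ₀) = b) :
    u ^ 2 + v ^ 2 = 2 * b * ρ₀ ^ (2 : ℝ) - 2 * a * ρ₀ ^ (γ + 1) := by
  rw [Real.rpow_two, Real.rpow_add_one hρ₀.ne', ← hb, hp₀]
  field_simp
  ring

theorem pd_sq_add_sq_of_bernoulli {f g : E2 → ℝ}
    (h : (fun y => f y ^ 2 + g y ^ 2) =ᶠ[𝓝 x]
      fun y => 2 * B (ψ y) * ρ y ^ (2 : ℝ) - 2 * A (ψ y) * ρ y ^ (γ + 1))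
    (hf : DifferentiableAt ℝ f x) (hg : DifferentiableAt ℝ g x)
    (hA : DifferentiableAt ℝ A (ψ x)) (hB : DifferentiableAt ℝ B (ψ x))
    (hψ : DifferentiableAt ℝ ψ x) (hρ : DifferentiableAt ℝ ρ x) (hρx : ρ x ≠ 0) (i : Fin 2) :
    f x * pd i f x + g x * pd i g x =
      deriv B (ψ x) * pd i ψ x * ρ x ^ 2 + 2 * B (ψ x) * ρ x * pd i ρ x
        - deriv A (ψ x) * pd i ψ x * ρ x ^ (γ + 1) - (γ + 1) * A (ψ x) * ρ x ^ γ * pd i ρ x := by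
  have dBρ : DifferentiableAt ℝ (fun y => 2 * B (ψ y) * ρ y ^ (2 : ℝ)) x := by
    fun_prop (disch := exact Or.inl hρx)
  have dAρ : DifferentiableAt ℝ (fun y => 2 * A (ψ y) * ρ y ^ (γ + 1)) x := by
    fun_prop (disch := exact Or.inl hρx)
  have hd := pd_congr (i := i) h
  rw [pd_add (hf.fun_pow 2) (hg.fun_pow 2), pd_sq hf, pd_sq hg, pd_sub dBρ dAρ,
    pd_const_mul_comp_mul_rpow 2 2 hB hψ hρ hρx,
    pd_const_mul_comp_mul_rpow 2 (γ + 1) hA hψ hρ hρx] at hd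
  norm_num [Real.rpow_two] at hd
  linear_combination hd / 2

theorem nonDivEq_of_balance_laws (hγ : γ ≠ 0) (hρ : 0 < ρ x)
    (hgrad : (pd 0 ψ x, pd 1 ψ x) ≠ (0, 0))
    (hmom : pd 1 ψ x ^ 2 * pd 0 (pd 0 ψ) x
        - pd 0 ψ x * pd 1 ψ x * (pd 0 (pd 1 ψ) x + pd 1 (pd 0 ψ) x)
        + pd 0 ψ x ^ 2 * pd 1 (pd 1 ψ) x = ρ x * (pd 0 ψ x * pd 0 p x + pd 1 ψ x * pd 1 p x))
    (hpres : ∀ i, pd i p x = (γ - 1) / γ *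
        (deriv A (ψ x) * pd i ψ x * ρ x ^ γ + γ * A (ψ x) * ρ x ^ (γ - 1) * pd i ρ x))
    (hbern : pd 0 ψ x ^ 2 + pd 1 ψ x ^ 2 = 2 * B (ψ x) * ρ x ^ 2 - 2 * A (ψ x) * ρ x ^ (γ + 1))
    (hbern' : ∀ i, pd 0 ψ x * pd i (pd 0 ψ) x + pd 1 ψ x * pd i (pd 1 ψ) x =
        deriv B (ψ x) * pd i ψ x * ρ x ^ 2 + 2 * B (ψ x) * ρ x * pd i ρ x
          - deriv A (ψ x) * pd i ψ x * ρ x ^ (γ + 1) - (γ + 1) * A (ψ x) * ρ x ^ γ * pd i ρ x) :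
    NonDivEq γ A B ψ (ρ x) x := by
  have hq : pd 0 ψ x ^ 2 + pd 1 ψ x ^ 2 ≠ 0 := fun h => hgrad <| by
    rw [Prod.mk.injEq]
    constructor <;> nlinarith [sq_nonneg (pd 0 ψ x), sq_nonneg (pd 1 ψ x)]
  have hpres' : ∀ i, γ * pd i p x = (γ - 1) *
      (deriv A (ψ x) * pd i ψ x * ρ x ^ γ + γ * A (ψ x) * ρ x ^ (γ - 1) * pd i ρ x) := fun i => by
    rw [hpres i]
    field_simp
  have hpow : ∀ n : ℕ, ρ x ^ (γ - 1 + n) = ρ x ^ (γ - 1) * ρ x ^ n :=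
    Real.rpow_add_natCast hρ.ne' (γ - 1)
  have h₁ : ρ x ^ γ = ρ x ^ (γ - 1) * ρ x := by simpa using hpow 1
  have h₂ : ρ x ^ (γ + 1) = ρ x ^ (γ - 1) * ρ x ^ 2 := by
    convert hpow 2 using 2; push_cast; ring
  have h₄ : ρ x ^ (γ + 3) = ρ x ^ (γ - 1) * ρ x ^ 4 := by
    convert hpow 4 using 2; push_cast; ring
  simp only [h₁, h₂] at hpres' hbern' hbern
  unfold NonDivEq
  rw [h₂, h₄, div_mul_eq_mul_div, div_mul_eq_mul_div, eq_div_iff hγ]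
  apply mul_left_cancel₀ hq
  set r := ρ x ^ (γ - 1)
  set q := pd 0 ψ x ^ 2 + pd 1 ψ x ^ 2
  set K := (γ - 1) * A (ψ x) * (r * ρ x ^ 2)
  set Dρ := pd 0 ψ x * pd 0 ρ x + pd 1 ψ x * pd 1 ρ x
  linear_combination γ * (K - q) * hmom
    + (K - q) * ρ x * (pd 0 ψ x * hpres' 0 + pd 1 ψ x * hpres' 1)
    + γ * K * (pd 0 ψ x * hbern' 0 + pd 1 ψ x * hbern' 1)
    - (γ * (γ - 1) * A (ψ x) * r * ρ x * Dρ + q * (γ - 1) * deriv A (ψ x) * r * ρ x ^ 2) * hbern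

end Flow

theorem euler_solution_gives_reduced_equation_general
    (γ : ℝ) (hγ : 1 < γ) (A B : ℝ → ℝ)
    (hA : ContDiff ℝ 1 A) (hB : ContDiff ℝ 1 B)
    (Ω : Set E2) (hΩ : IsOpen Ω)
    (m₁ m₂ p ρ : E2 → ℝ)
    (hm₁ : ContDiffOn ℝ 1 m₁ Ω) (hm₂ : ContDiffOn ℝ 1 m₂ Ω)
    (hρc : ContDiffOn ℝ 1 ρ Ω)
    (hρpos : ∀ x ∈ Ω, 0 < ρ x)
    (heuler : EulerEqs γ Ω m₁ m₂ p ρ)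
    (ψ : E2 → ℝ) (hψ : ContDiffOn ℝ 2 ψ Ω)
    (hstream₁ : ∀ x ∈ Ω, pd 0 ψ x = -m₂ x)
    (hstream₂ : ∀ x ∈ Ω, pd 1 ψ x = m₁ x)
    (hnz : ∀ x ∈ Ω, (pd 0 ψ x, pd 1 ψ x) ≠ (0, 0))
    (hpres : ∀ x ∈ Ω, p x = ((γ - 1) / γ) * A (ψ x) * ρ x ^ γ)
    (hbern : ∀ x ∈ Ω,
      (m₁ x ^ 2 + m₂ x ^ 2) / (2 * ρ x ^ 2) + γ * p x / ((γ - 1) * ρ x) = B (ψ x)) :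
    ∀ x ∈ Ω, NonDivEq γ A B ψ (ρ x) x := by
  intro x hx
  have hxΩ : Ω ∈ 𝓝 x := hΩ.mem_nhds hx
  have hγ₀ : γ ≠ 0 := by linarith
  have hρx : ρ x ≠ 0 := (hρpos x hx).ne'
  have dm₁ := (hm₁.differentiableOn one_ne_zero).differentiableAt hxΩ
  have dm₂ := (hm₂.differentiableOn one_ne_zero).differentiableAt hxΩ
  have dρ := (hρc.differentiableOn one_ne_zero).differentiableAt hxΩ
  have dψ := (hψ.differentiableOn two_ne_zero).differentiableAt hxΩ
  have dA := hA.differentiable one_ne_zero (ψ x)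
  have dB := hB.differentiable one_ne_zero (ψ x)
  have h₀ : pd 0 ψ =ᶠ[𝓝 x] fun y => -m₂ y := eventually_of_mem hxΩ hstream₁
  have h₁ : pd 1 ψ =ᶠ[𝓝 x] m₁ := eventually_of_mem hxΩ hstream₂
  have hp : p =ᶠ[𝓝 x] fun y => (γ - 1) / γ * A (ψ y) * ρ y ^ γ := eventually_of_mem hxΩ hpres
  have hq : (fun y => pd 0 ψ y ^ 2 + pd 1 ψ y ^ 2) =ᶠ[𝓝 x]
      fun y => 2 * B (ψ y) * ρ y ^ (2 : ℝ) - 2 * A (ψ y) * ρ y ^ (γ + 1) :=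
    eventually_of_mem hxΩ fun y hy => by
      dsimp only
      rw [hstream₁ y hy, hstream₂ y hy, neg_sq, add_comm]
      exact sq_add_sq_eq_of_bernoulli hγ₀ (by linarith) (hρpos y hy) (hpres y hy) (hbern y hy)
  exact nonDivEq_of_balance_laws hγ₀ (hρpos x hx) (hnz x hx)
    (heuler.transverse_momentum_of_stream hx dm₁ dm₂ dρ hρx h₀ h₁)
    (fun i => (pd_congr hp).trans (pd_const_mul_comp_mul_rpow _ γ dA dψ dρ hρx))
    (by simpa [Real.rpow_two] using hq.eq_of_nhds)
    (pd_sq_add_sq_of_bernoulli hq (dm₂.neg.congr_of_eventuallyEq h₀)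
      (dm₁.congr_of_eventuallyEq h₁) dA dB dψ dρ hρx)

/-- the reduction in Section 3 of the paper. If `(m, p, ρ)` is a
`C¹` Euler flow with stream function `ψ ∈ C²` (`ψ_{x₁} = -m₂`, `ψ_{x₂} = m₁`),
`∇ψ` nowhere zero, satisfying the constitutive relations `p = ((γ-1)/γ)A(ψ)ρ^γ`
and `|m|²/(2ρ²) + γp/((γ-1)ρ) = B(ψ)` with `ρ` on the subsonic branch, then `ψ`
satisfies the reduced elliptic equation `a_{ij}(ψ,∇ψ)ψ_{x_ix_j} = F(ψ,∇ψ)` on `Ω`. -/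
theorem euler_solution_gives_reduced_equation
    (γ : ℝ) (hγ : 1 < γ) (A B : ℝ → ℝ)
    (hA : ContDiff ℝ 1 A) (hB : ContDiff ℝ 1 B)
    (hApos : ∀ s, 0 < A s) (hBpos : ∀ s, 0 < B s)
    (Ω : Set E2) (hΩ : IsOpen Ω)
    (m₁ m₂ p ρ : E2 → ℝ)
    (hm₁ : ContDiffOn ℝ 1 m₁ Ω) (hm₂ : ContDiffOn ℝ 1 m₂ Ω)
    (hpc : ContDiffOn ℝ 1 p Ω) (hρc : ContDiffOn ℝ 1 ρ Ω)
    (hρpos : ∀ x ∈ Ω, 0 < ρ x)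
    (heuler : EulerEqs γ Ω m₁ m₂ p ρ)
    (ψ : E2 → ℝ) (hψ : ContDiffOn ℝ 2 ψ Ω)
    (hstream₁ : ∀ x ∈ Ω, pd 0 ψ x = -m₂ x)
    (hstream₂ : ∀ x ∈ Ω, pd 1 ψ x = m₁ x)
    (hnz : ∀ x ∈ Ω, (pd 0 ψ x, pd 1 ψ x) ≠ (0, 0))
    (hpres : ∀ x ∈ Ω, p x = ((γ - 1) / γ) * A (ψ x) * ρ x ^ γ)
    (hbern : ∀ x ∈ Ω,
      (m₁ x ^ 2 + m₂ x ^ 2) / (2 * ρ x ^ 2) + γ * p x / ((γ - 1) * ρ x) = B (ψ x))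
    (hbranch : ∀ x ∈ Ω, 2 * B (ψ x) / ((γ + 1) * A (ψ x)) < ρ x ^ (γ - 1)) :
    ∀ x ∈ Ω, NonDivEq γ A B ψ (ρ x) x :=
  euler_solution_gives_reduced_equation_general γ hγ A B hA hB Ω hΩ m₁ m₂ p ρ hm₁ hm₂ hρc hρpos
    heuler ψ hψ hstream₁ hstream₂ hnz hpres hbern
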